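/- arXiv:1102.3417 — 2 statements merged into one kernel-verified Lean document; each statement's English description precedes it below -/
import Mathlib

section
/- The function L : (0,2] → ℝ defined by L(h) = (π − arccos(1−h)) / √(2h) is strictly decreasing, satisfies L(2) = 0 and L(h) → ∞ as h → 0⁺, and is a bijection from (0,2] onto [0,∞). -/
open Real Filter Topology

/-- The half-length of the zero-resistance defect (`d = 0`, `γ = 0`) sustaining the pinned
fluxon with Hamiltonian value `h` inside the defect: `L(h) = (π − arccos(1−h)) / √(2h)`. -/
noncomputable def Lf (h : ℝ) : ℝ := (π - Real.arccos (1 - h)) / Real.sqrt (2 * h)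

/-!
Put `φ = (π − arccos(1−h))/2`. The half-angle formula gives `cos φ = √(h/2)`, so
`L(h) = φ / cos φ`. As `h` increases from `0` to `2`, `φ` decreases from `π/2` to `0`, and
`x ↦ x / cos x` is strictly increasing on `[0, π/2)`; hence `L` is strictly decreasing.
Surjectivity onto `[0, ∞)` is the intermediate value theorem, using `L(2) = 0` and the blow-up
`L(h) → ∞` as `h → 0⁺` (the numerator tends to `π`, the denominator to `0⁺`).
-/

theorem ContinuousOn.surjOn_Ici_of_tendsto_nhdsGT {α δ : Type*}
    [ConditionallyCompleteLinearOrder α] [TopologicalSpace α] [OrderTopology α]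
    [DenselyOrdered α] [LinearOrder δ] [TopologicalSpace δ] [OrderClosedTopology δ]
    {f : α → δ} {a b : α} (hab : a < b) (hf : ContinuousOn f (Set.Ioc a b))
    (hlim : Tendsto f (𝓝[>] a) atTop) : Set.SurjOn f (Set.Ioc a b) (Set.Ici (f b)) := by
  have := nhdsGT_neBot_of_exists_gt ⟨b, hab⟩
  intro y hy
  obtain ⟨c, hyc, hc⟩ := ((hlim.eventually_ge_atTop y).and (Ioc_mem_nhdsGT hab)).exists
  exact hf.surjOn_Icc (Set.right_mem_Ioc.2 hab) hc ⟨hy, hyc⟩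

theorem strictMonoOn_div_cos : StrictMonoOn (fun x => x / cos x) (Set.Ico 0 (π / 2)) := by
  intro s ⟨hs, _⟩ t ⟨_, ht⟩ hst
  have hcos_pos {x : ℝ} (h0 : 0 ≤ x) (h1 : x < π / 2) : 0 < cos x :=
    cos_pos_of_mem_Ioo ⟨by linarith [pi_pos], h1⟩
  have hcos_anti : cos t ≤ cos s := cos_le_cos_of_nonneg_of_le_pi hs (by linarith) hst.le
  rw [div_lt_div_iff₀ (hcos_pos hs (hst.trans ht)) (hcos_pos (hs.trans hst.le) ht)]
  calc s * cos t < t * cos t := mul_lt_mul_of_pos_right hst (hcos_pos (hs.trans hst.le) ht)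
    _ ≤ t * cos s := mul_le_mul_of_nonneg_left hcos_anti (hs.trans hst.le)

theorem cos_pi_sub_arccos_div_two {x : ℝ} (hx₁ : -1 ≤ x) (hx₂ : x ≤ 1) :
    cos ((π - arccos x) / 2) = √((1 - x) / 2) := by
  rw [show (π - arccos x) / 2 = π / 2 - arccos x / 2 by ring, cos_pi_div_two_sub,
    sin_half_eq_sqrt (arccos_nonneg x) (by linarith [arccos_le_pi x, pi_pos]), cos_arccos hx₁ hx₂]

theorem Lf_eq_div_cos {h : ℝ} (h₀ : 0 ≤ h) (h₂ : h ≤ 2) :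
    Lf h = (π - arccos (1 - h)) / 2 / cos ((π - arccos (1 - h)) / 2) := by
  have hsqrt : √(2 * h) = 2 * √(h / 2) := by
    rw [show 2 * h = 2 ^ 2 * (h / 2) by ring, sqrt_mul (by norm_num), sqrt_sq zero_le_two]
  rw [cos_pi_sub_arccos_div_two (by linarith) (by linarith), sub_sub_cancel, Lf, hsqrt, div_div]

theorem Lf_strictAntiOn : StrictAntiOn Lf (Set.Ioc 0 2) := by
  have hφ_mem {h : ℝ} (hh : h ∈ Set.Ioc (0 : ℝ) 2) :
      (π - arccos (1 - h)) / 2 ∈ Set.Ico 0 (π / 2) := by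
    have : 0 < arccos (1 - h) := arccos_pos.2 (by linarith [hh.1])
    constructor <;> linarith [arccos_le_pi (1 - h)]
  intro a ha b hb hab
  have harccos : arccos (1 - a) < arccos (1 - b) :=
    strictAntiOn_arccos ⟨by linarith [hb.2], by linarith [hb.1]⟩
      ⟨by linarith [ha.2], by linarith [ha.1]⟩ (by linarith)
  rw [Lf_eq_div_cos ha.1.le ha.2, Lf_eq_div_cos hb.1.le hb.2]
  exact strictMonoOn_div_cos (hφ_mem hb) (hφ_mem ha) (by linarith)

theorem Lf_two : Lf 2 = 0 := by
  simp [Lf, show (1 : ℝ) - 2 = -1 by norm_num]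

theorem continuous_pi_sub_arccos_one_sub : Continuous fun h : ℝ => π - arccos (1 - h) := by
  fun_prop

theorem Lf_continuousOn : ContinuousOn Lf (Set.Ioi 0) :=
  continuous_pi_sub_arccos_one_sub.continuousOn.div (by fun_prop)
    fun _ hh => (sqrt_pos.2 (mul_pos two_pos hh)).ne'

theorem tendsto_Lf_nhdsGT_zero : Tendsto Lf (𝓝[>] 0) atTop := by
  have hnum : Tendsto (fun h : ℝ => π - arccos (1 - h)) (𝓝[>] 0) (𝓝 π) :=
    tendsto_nhdsWithin_of_tendsto_nhds
      (continuous_pi_sub_arccos_one_sub.tendsto' 0 π (by simp))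
  have hden : Tendsto (fun h : ℝ => √(2 * h)) (𝓝[>] 0) (𝓝[>] 0) := by
    refine tendsto_nhdsWithin_iff.2 ⟨?_, ?_⟩
    · exact tendsto_nhdsWithin_of_tendsto_nhds
        ((continuous_const_mul 2).sqrt.tendsto' 0 0 (by simp))
    · filter_upwards [self_mem_nhdsWithin] with h hh
      exact sqrt_pos.2 (mul_pos two_pos hh)
  exact (hnum.pos_mul_atTop pi_pos hden.inv_tendsto_nhdsGT_zero).congr
    fun _ => (div_eq_mul_inv _ _).symm

/-- The function `L(h) = (π − arccos(1−h)) / √(2h)` is strictly decreasing on `(0,2]`,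
satisfies `L(2) = 0`, tends to `+∞` as `h → 0⁺`, and is a bijection from `(0,2]`
onto `[0,∞)`. -/
theorem stmt1 :
    StrictAntiOn Lf (Set.Ioc 0 2) ∧
    Lf 2 = 0 ∧
    Tendsto Lf (𝓝[>] (0 : ℝ)) atTop ∧
    Set.BijOn Lf (Set.Ioc 0 2) (Set.Ici 0) := by
  refine ⟨Lf_strictAntiOn, Lf_two, tendsto_Lf_nhdsGT_zero, ?_, Lf_strictAntiOn.injOn, ?_⟩
  · intro h hh
    rw [← Lf_two]
    exact Lf_strictAntiOn.antitoneOn hh (Set.right_mem_Ioc.2 two_pos) hh.2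
  · simpa only [Lf_two] using (Lf_continuousOn.mono Set.Ioc_subset_Ioi_self)
      |>.surjOn_Ici_of_tendsto_nhdsGT two_pos tendsto_Lf_nhdsGT_zero
end

section
/- For every L > 0 the following holds: let φ_in ∈ (0, π) be the unique solution of L = (π − φ_in)/(2 sin(φ_in/2)) and set T = cos(φ_in/2) ∈ (0,1). Then there exists μ ∈ (0,1) satisfying −μ(μ + T) + (1 − T²) + √(1−μ²)·(μ + T)·tan(√(1−μ²)·L) = 0. -/
/-!
The defect half-length `L(φ) = (π - φ) / (2 sin (φ / 2))` decreases strictly from `+∞` to `0`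
on `(0, π)`, by the bounds `(π - φ) / φ < L(φ) < π (π - φ) / (2 φ)` coming from
`2x/π < sin x < x`; this gives the unique `φ_in`.

For the root `μ`, let `s ∈ (0, π/2)` be the fixed point `s = L cos s`. At `μ = sin s` the argument
of the tangent is exactly `s`, the two `μ`-dependent terms cancel and the matching function
equals `1 - T² > 0`, while at `μ = 1` it equals `-T(1 + T) < 0`. On `[sin s, 1]` the argument
stays in `[0, s]`, so the function is continuous there and the intermediate value theorem applies.
-/

open Real Set

noncomputable section

def defectHalfLength (φ : ℝ) : ℝ := (π - φ) / (2 * sin (φ / 2))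

def matchingFunction (T L μ : ℝ) : ℝ :=
  -μ * (μ + T) + (1 - T ^ 2) + √(1 - μ ^ 2) * (μ + T) * tan (√(1 - μ ^ 2) * L)

end

lemma sin_half_pos {φ : ℝ} (hφ : φ ∈ Ioo 0 π) : 0 < sin (φ / 2) :=
  sin_pos_of_pos_of_lt_pi (by linarith [hφ.1]) (by linarith [hφ.2, pi_pos])

lemma cos_half_mem_Ioo {φ : ℝ} (hφ : φ ∈ Ioo 0 π) : cos (φ / 2) ∈ Ioo (0 : ℝ) 1 := by
  refine ⟨cos_pos_of_mem_Ioo ⟨by linarith [hφ.1, pi_pos], by linarith [hφ.2]⟩, ?_⟩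
  simpa using cos_lt_cos_of_nonneg_of_le_pi le_rfl (by linarith [hφ.2, pi_pos]) (half_pos hφ.1)

lemma strictAntiOn_defectHalfLength : StrictAntiOn defectHalfLength (Ioo 0 π) := by
  intro a ha b hb hab
  have hsin_lt : sin (a / 2) < sin (b / 2) :=
    strictMonoOn_sin ⟨by linarith [ha.1, pi_pos], by linarith [ha.2]⟩
      ⟨by linarith [hb.1, pi_pos], by linarith [hb.2]⟩ (by linarith)
  have hsa := sin_half_pos ha
  calc defectHalfLength b < (π - a) / (2 * sin (b / 2)) :=
        div_lt_div_of_pos_right (by linarith) (by linarith)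
    _ < defectHalfLength a := div_lt_div_of_pos_left (by linarith [ha.2]) (by linarith) (by linarith)

lemma continuousOn_defectHalfLength : ContinuousOn defectHalfLength (Ioo 0 π) :=
  ContinuousOn.div (by fun_prop) (by fun_prop) fun _ hφ => (mul_pos two_pos (sin_half_pos hφ)).ne'

lemma pi_sub_div_lt_defectHalfLength {φ : ℝ} (hφ : φ ∈ Ioo 0 π) :
    (π - φ) / φ < defectHalfLength φ := by
  have h2sin : 2 * sin (φ / 2) < φ := by linarith [sin_lt (half_pos hφ.1)]
  exact div_lt_div_of_pos_left (by linarith [hφ.2]) (by linarith [sin_half_pos hφ]) h2sin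

lemma defectHalfLength_lt_pi_mul_pi_sub_div {φ : ℝ} (hφ : φ ∈ Ioo 0 π) :
    defectHalfLength φ < π * (π - φ) / (2 * φ) := by
  have hjordan : φ < π * sin (φ / 2) := by
    have := mul_lt_sin (half_pos hφ.1) (by linarith [hφ.2])
    field_simp at this
    linarith
  have hπφ : 0 < π - φ := by linarith [hφ.2]
  rw [defectHalfLength, div_lt_div_iff₀ (by linarith [sin_half_pos hφ]) (by linarith [hφ.1])]
  nlinarith [mul_lt_mul_of_pos_left hjordan hπφ]

lemma exists_defectHalfLength_eq {L : ℝ} (hL : 0 < L) :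
    ∃ φ ∈ Ioo 0 π, defectHalfLength φ = L := by
  have hπ := pi_pos
  set a := π / (L + 1)
  set b := π ^ 2 / (π + 2 * L)
  have ha : a ∈ Ioo 0 π := ⟨by positivity, div_lt_self hπ (by linarith)⟩
  have hb : b ∈ Ioo 0 π := ⟨by positivity, by
    rw [div_lt_iff₀ (by positivity)]; nlinarith⟩
  have hab : a < b := by
    rw [div_lt_div_iff₀ (by positivity) (by positivity)]
    nlinarith [mul_pos (mul_pos hπ hL) (show 0 < π - 2 by linarith [pi_gt_three])]
  have hLa : L < defectHalfLength a := by
    have hLa_eq : (π - a) / a = L := by simp only [a]; field_simp; ring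
    exact hLa_eq ▸ pi_sub_div_lt_defectHalfLength ha
  have hLb : defectHalfLength b < L := by
    have hLb_eq : π * (π - b) / (2 * b) = L := by simp only [b]; field_simp; ring
    exact hLb_eq ▸ defectHalfLength_lt_pi_mul_pi_sub_div hb
  have hIcc : Icc a b ⊆ Ioo 0 π := Icc_subset_Ioo ha.1 hb.2
  obtain ⟨φ, hφ, hφL⟩ := intermediate_value_Ioo' hab.le
    (continuousOn_defectHalfLength.mono hIcc) ⟨hLb, hLa⟩
  exact ⟨φ, hIcc (Ioo_subset_Icc_self hφ), hφL⟩

lemma existsUnique_defectHalfLength_eq {L : ℝ} (hL : 0 < L) :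
    ∃! φ : ℝ, φ ∈ Ioo 0 π ∧ L = defectHalfLength φ := by
  obtain ⟨φ, hφ, hφL⟩ := exists_defectHalfLength_eq hL
  exact ⟨φ, ⟨hφ, hφL.symm⟩, fun ψ ⟨hψ, hψL⟩ =>
    strictAntiOn_defectHalfLength.injOn hψ hφ (hψL.symm.trans hφL.symm)⟩

section MatchingFunction

variable {T L : ℝ}

lemma sqrt_one_sub_sin_sq {s : ℝ} (hs : 0 ≤ cos s) : √(1 - sin s ^ 2) = cos s := by
  rw [← cos_sq', sqrt_sq hs]

lemma exists_eq_mul_cos (hL : 0 < L) : ∃ s ∈ Ioo 0 (π / 2), s = L * cos s := by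
  have hsub : Ioo (0 - L * cos 0) (π / 2 - L * cos (π / 2)) ⊆
      (fun s => s - L * cos s) '' Ioo 0 (π / 2) :=
    intermediate_value_Ioo (f := fun s => s - L * cos s) pi_div_two_pos.le (by fun_prop)
  have h0 : (0 : ℝ) ∈ Ioo (0 - L * cos 0) (π / 2 - L * cos (π / 2)) := by
    simpa using ⟨hL, pi_pos⟩
  obtain ⟨s, hs, hs_eq⟩ := hsub h0
  exact ⟨s, hs, sub_eq_zero.mp hs_eq⟩

lemma matchingFunction_one : matchingFunction T L 1 = -T * (1 + T) := by
  simp only [matchingFunction, one_pow, sub_self, sqrt_zero, zero_mul, tan_zero, mul_zero]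
  ring

lemma matchingFunction_sin_of_eq_mul_cos {s : ℝ} (hs : s ∈ Ioo 0 (π / 2))
    (hsL : s = L * cos s) : matchingFunction T L (sin s) = 1 - T ^ 2 := by
  have hcos : 0 < cos s := cos_pos_of_mem_Ioo ⟨by linarith [hs.1, pi_pos], hs.2⟩
  have htan : cos s * tan s = sin s := by rw [tan_eq_sin_div_cos]; field_simp
  rw [matchingFunction, sqrt_one_sub_sin_sq hcos.le, mul_comm (cos s) L, ← hsL]
  linear_combination (sin s + T) * htan

lemma continuousOn_matchingFunction :
    ContinuousOn (matchingFunction T L) {μ | cos (√(1 - μ ^ 2) * L) ≠ 0} := by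
  have htan : ContinuousOn (fun μ => tan (√(1 - μ ^ 2) * L)) {μ | cos (√(1 - μ ^ 2) * L) ≠ 0} :=
    continuousOn_tan.comp (by fun_prop) fun _ hμ => hμ
  unfold matchingFunction
  fun_prop

lemma exists_matchingFunction_eq_zero (hL : 0 < L) (hT₀ : 0 < T) (hT₁ : T < 1) :
    ∃ μ ∈ Ioo (0 : ℝ) 1, matchingFunction T L μ = 0 := by
  obtain ⟨s, hs, hsL⟩ := exists_eq_mul_cos hL
  have hsin : sin s ∈ Ioo (0 : ℝ) 1 :=
    ⟨sin_pos_of_pos_of_lt_pi hs.1 (by linarith [hs.2, pi_pos]),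
      by simpa using sin_lt_sin_of_lt_of_le_pi_div_two (by linarith [hs.1, pi_pos]) le_rfl hs.2⟩
  have hcos : Icc (sin s) 1 ⊆ {μ | cos (√(1 - μ ^ 2) * L) ≠ 0} := by
    intro μ hμ
    have hle : √(1 - μ ^ 2) * L ≤ s := by
      calc √(1 - μ ^ 2) * L ≤ √(1 - sin s ^ 2) * L := by
            gcongr; exacts [hsin.1.le, hμ.1]
        _ = s := by
          rw [sqrt_one_sub_sin_sq (cos_pos_of_mem_Ioo ⟨by linarith [hs.1, pi_pos], hs.2⟩).le,
            mul_comm, ← hsL]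
    have hnonneg : 0 ≤ √(1 - μ ^ 2) * L := by positivity
    exact (cos_pos_of_mem_Ioo ⟨by linarith [pi_pos], by linarith [hs.2]⟩).ne'
  have h0 : (0 : ℝ) ∈ Ioo (matchingFunction T L 1) (matchingFunction T L (sin s)) := by
    rw [matchingFunction_one, matchingFunction_sin_of_eq_mul_cos hs hsL]
    constructor <;> nlinarith
  obtain ⟨μ, hμ, hμ_zero⟩ := intermediate_value_Ioo' hsin.2.le
    (continuousOn_matchingFunction.mono hcos) h0
  exact ⟨μ, ⟨hsin.1.trans hμ.1, hμ.2⟩, hμ_zero⟩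

end MatchingFunction

/-- For every `L > 0`: the equation `L = (π − φ_in)/(2 sin(φ_in/2))` has a unique
solution `φ_in ∈ (0, π)`; and for this `φ_in`, with `T = cos(φ_in/2) ∈ (0,1)`, there
exists `μ ∈ (0,1)` satisfying
`−μ(μ + T) + (1 − T²) + √(1−μ²)·(μ + T)·tan(√(1−μ²)·L) = 0`. -/
theorem stmt9 (L : ℝ) (hL : 0 < L) :
    (∃! φin : ℝ, φin ∈ Set.Ioo 0 π ∧ L = (π - φin) / (2 * Real.sin (φin / 2))) ∧
    (∀ φin : ℝ, φin ∈ Set.Ioo 0 π → L = (π - φin) / (2 * Real.sin (φin / 2)) →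
      Real.cos (φin / 2) ∈ Set.Ioo (0 : ℝ) 1 ∧
      ∃ μ ∈ Set.Ioo (0 : ℝ) 1,
        -μ * (μ + Real.cos (φin / 2)) + (1 - Real.cos (φin / 2) ^ 2)
          + Real.sqrt (1 - μ ^ 2) * (μ + Real.cos (φin / 2)) *
              Real.tan (Real.sqrt (1 - μ ^ 2) * L) = 0) := by
  refine ⟨existsUnique_defectHalfLength_eq hL, fun φin hφin _ => ?_⟩
  have hT := cos_half_mem_Ioo hφin
  exact ⟨hT, exists_matchingFunction_eq_zero hL hT.1 hT.2⟩
end
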